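/- arXiv:1709.05432 — 15 statements merged into one kernel-verified Lean document; each statement's English description precedes it below -/
import Mathlib

section
/- Let (A, ∘, α) be a multiplicative Hom-alternative superalgebra and (V, L_≻, R_≺, β) a bimodule over A. Then (V, L_≻^α, R_≺^α, β) is also a bimodule over A, where L_≻^α(x)v = L_≻(α²(x))v and R_≺^α(x)v = R_≺(α²(x))v. -/
open LinearMap
open scoped TensorProduct

/-- The super sign $(-1)^{ij}$ for parities $i,j \in \mathbb{Z}_2$. -/
def sg (R : Type*) [Field R] (i j : ZMod 2) : R := (-1 : R) ^ (i.val * j.val)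

variable {K : Type*} [Field K]
variable {A B V : Type*} [AddCommGroup A] [Module K A]
  [AddCommGroup B] [Module K B] [AddCommGroup V] [Module K V]

/-- An even linear map between graded spaces. -/
def EvenMap (hA : ZMod 2 → Submodule K A) (hB : ZMod 2 → Submodule K B)
    (f : A →ₗ[K] B) : Prop :=
  ∀ (i : ZMod 2) (x : A), x ∈ hA i → f x ∈ hB i

/-- An even bilinear map between graded spaces. -/
def EvenBil2 (hA : ZMod 2 → Submodule K A) (hB : ZMod 2 → Submodule K B)
    (hV : ZMod 2 → Submodule K V) (f : A →ₗ[K] B →ₗ[K] V) : Prop :=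
  ∀ (i j : ZMod 2) (x : A) (y : B), x ∈ hA i → y ∈ hB j → f x y ∈ hV (i + j)

/-- The Hom-associator. -/
def asc (μ : A →ₗ[K] A →ₗ[K] A) (α : A →ₗ[K] A) (x y z : A) : A :=
  μ (μ x y) (α z) - μ (α x) (μ y z)

/-- Hom-alternative superalgebra. -/
def IsHomAltSuper (h : ZMod 2 → Submodule K A) (μ : A →ₗ[K] A →ₗ[K] A)
    (α : A →ₗ[K] A) : Prop :=
  EvenMap h h α ∧ EvenBil2 h h h μ ∧
  ∀ (i j k : ZMod 2) (x y z : A), x ∈ h i → y ∈ h j → z ∈ h k →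
    asc μ α x y z + sg K i j • asc μ α y x z = 0 ∧
    asc μ α x y z + sg K j k • asc μ α x z y = 0

/-- Multiplicativity of the twisting map. -/
def Mult (μ : A →ₗ[K] A →ₗ[K] A) (α : A →ₗ[K] A) : Prop :=
  ∀ x y : A, α (μ x y) = μ (α x) (α y)

/-- Bimodule over a Hom-alternative superalgebra: `L x v = x ≻ v`, `R x v = v ≺ x`. -/
def IsAltBimod (hA : ZMod 2 → Submodule K A) (hV : ZMod 2 → Submodule K V)
    (μ : A →ₗ[K] A →ₗ[K] A) (α : A →ₗ[K] A)
    (L R : A →ₗ[K] V →ₗ[K] V) (β : V →ₗ[K] V) : Prop :=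
  EvenMap hV hV β ∧ EvenBil2 hA hV hV L ∧ EvenBil2 hA hV hV R ∧
  ∀ (i j p : ZMod 2) (x y : A) (v : V), x ∈ hA i → y ∈ hA j → v ∈ hV p →
    (R (α y) (R x v) + sg K i p • R (α y) (L x v)
      - sg K i p • L (α x) (R y v) - R (μ x y) (β v) = 0) ∧
    (L (α y) (R x v) - R (α x) (L y v)
      - sg K i p • L (μ y x) (β v) + sg K i p • L (α y) (L x v) = 0) ∧
    (L (μ x y) (β v) + sg K i j • L (μ y x) (β v)
      - L (α x) (L y v) - sg K i j • L (α y) (L x v) = 0) ∧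
    (R (μ x y) (β v) + sg K i j • R (μ y x) (β v)
      - R (α y) (R x v) - sg K i j • R (α x) (R y v) = 0)

theorem stmt0 (h : ZMod 2 → Submodule K A) (hV : ZMod 2 → Submodule K V)
    (μ : A →ₗ[K] A →ₗ[K] A) (α : A →ₗ[K] A)
    (L R : A →ₗ[K] V →ₗ[K] V) (β : V →ₗ[K] V)
    (halt : IsHomAltSuper h μ α) (hmul : Mult μ α)
    (hbm : IsAltBimod h hV μ α L R β) :
    IsAltBimod h hV μ α (L ∘ₗ (α ∘ₗ α)) (R ∘ₗ (α ∘ₗ α)) β := by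
  obtain ⟨hαe, hμe, _⟩ := halt
  obtain ⟨hβ, hL, hR, hax⟩ := hbm
  refine ⟨hβ, ?_, ?_, ?_⟩
  · intro i j x v hx hv
    exact hL i j _ v (hαe i _ (hαe i x hx)) hv
  · intro i j x v hx hv
    exact hR i j _ v (hαe i _ (hαe i x hx)) hv
  · intro i j p x y v hx hy hv
    have h' := hax i j p (α (α x)) (α (α y)) v
      (hαe i _ (hαe i x hx)) (hαe j _ (hαe j y hy)) hv
    have hm : ∀ x y, μ (α x) (α y) = α (μ x y) := fun x y => (hmul x y).symm
    simpa [LinearMap.comp_apply, hm] using h'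
end

section
/- Let (A, ·, α) be a supercommutative Hom-associative superalgebra and (A', ∘', α') a Hom-alternative superalgebra. Then the tensor product A ⊗ A' with product (x⊗a)∗(y⊗b) = (-1)^{|a||y|} (x·y) ⊗ (a∘'b) and twisting map α⊗α' is a Hom-alternative superalgebra. -/
open LinearMap
open scoped TensorProduct

variable {K : Type*} [Field K]
variable {A B V : Type*} [AddCommGroup A] [Module K A]
  [AddCommGroup B] [Module K B] [AddCommGroup V] [Module K V]

lemma zmod2_cases (i : ZMod 2) : i = 0 ∨ i = 1 := by revert i; decide

lemma sg_comp : ∀ i j : ZMod 2, sg K i j = if i = 1 ∧ j = 1 then -1 else 1 := by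
  intro i j
  rcases zmod2_cases i with rfl|rfl <;> rcases zmod2_cases j with rfl|rfl <;>
    simp [sg, ZMod.val_one]

-- trilinearity of the associator
section ascLin
variable (μ : A →ₗ[K] A →ₗ[K] A) (α : A →ₗ[K] A)

lemma asc_add1 (x x' y z : A) :
    asc μ α (x + x') y z = asc μ α x y z + asc μ α x' y z := by
  simp [asc]; abel

lemma asc_add2 (x y y' z : A) :
    asc μ α x (y + y') z = asc μ α x y z + asc μ α x y' z := by
  simp [asc]; abel

lemma asc_add3 (x y z z' : A) :
    asc μ α x y (z + z') = asc μ α x y z + asc μ α x y z' := by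
  simp [asc]; abel

lemma asc_smul1 (r : K) (x y z : A) :
    asc μ α (r • x) y z = r • asc μ α x y z := by
  simp [asc, smul_sub]

lemma asc_smul2 (r : K) (x y z : A) :
    asc μ α x (r • y) z = r • asc μ α x y z := by
  simp [asc, smul_sub]

lemma asc_smul3 (r : K) (x y z : A) :
    asc μ α x y (r • z) = r • asc μ α x y z := by
  simp [asc, smul_sub]

lemma asc_zero1 (y z : A) : asc μ α 0 y z = 0 := by simp [asc]

lemma asc_zero2 (x z : A) : asc μ α x 0 z = 0 := by simp [asc]

lemma asc_zero3 (x y : A) : asc μ α x y 0 = 0 := by simp [asc]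

end ascLin

section Main

variable (hA : ZMod 2 → Submodule K A) (hB : ZMod 2 → Submodule K B)
    (μ : A →ₗ[K] A →ₗ[K] A) (α : A →ₗ[K] A)
    (ν : B →ₗ[K] B →ₗ[K] B) (α' : B →ₗ[K] B)
    (m : (A ⊗[K] B) →ₗ[K] (A ⊗[K] B) →ₗ[K] (A ⊗[K] B))

/-- Value of the tensor-product associator on homogeneous pure tensors. -/
lemma asc_pure
    (hαe : EvenMap hA hA α) (hμe : EvenBil2 hA hA hA μ)
    (hassoc : ∀ x y z : A, μ (μ x y) (α z) = μ (α x) (μ y z))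
    (hα'e : EvenMap hB hB α') (hνe : EvenBil2 hB hB hB ν)
    (hm : ∀ (j k : ZMod 2) (x y : A) (a b : B), a ∈ hB j → y ∈ hA k →
      m (x ⊗ₜ[K] a) (y ⊗ₜ[K] b) = sg K j k • ((μ x y) ⊗ₜ[K] (ν a b)))
    (i2 j1 j2 k1 : ZMod 2) (x y z : A) (a b c : B)
    (ha : a ∈ hB i2) (hy : y ∈ hA j1) (hb : b ∈ hB j2) (hz : z ∈ hA k1) :
    asc m (TensorProduct.map α α') (x ⊗ₜ[K] a) (y ⊗ₜ[K] b) (z ⊗ₜ[K] c)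
      = (sg K i2 j1 * sg K i2 k1 * sg K j2 k1) •
        ((μ (α x) (μ y z)) ⊗ₜ[K] (asc ν α' a b c)) := by
  simp only [asc, TensorProduct.map_tmul]
  rw [hm i2 j1 x y a b ha hy, hm j2 k1 y z b c hb hz,
    map_smul, LinearMap.smul_apply, LinearMap.map_smul,
    hm (i2 + j2) k1 _ (α z) _ (α' c) (hνe i2 j2 a b ha hb) (hαe k1 z hz),
    hm i2 (j1 + k1) (α x) _ (α' a) _ (hα'e i2 a ha) (hμe j1 k1 y z hy hz),
    hassoc x y z]
  rw [smul_smul, smul_smul, TensorProduct.tmul_sub, smul_sub]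
  have h1 : sg K i2 j1 * sg K (i2 + j2) k1 = sg K i2 j1 * sg K i2 k1 * sg K j2 k1 := by
    rcases zmod2_cases i2 with rfl|rfl <;> rcases zmod2_cases j1 with rfl|rfl <;>
      rcases zmod2_cases j2 with rfl|rfl <;> rcases zmod2_cases k1 with rfl|rfl <;>
      norm_num [sg_comp, show ((1:ZMod 2)+1) = 0 by decide, show (0:ZMod 2) ≠ 1 by decide, show (2:ZMod 2) ≠ 1 by decide, show (2:ZMod 2) = 0 by decide]
  have h2 : sg K j2 k1 * sg K i2 (j1 + k1) = sg K i2 j1 * sg K i2 k1 * sg K j2 k1 := by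
    rcases zmod2_cases i2 with rfl|rfl <;> rcases zmod2_cases j1 with rfl|rfl <;>
      rcases zmod2_cases j2 with rfl|rfl <;> rcases zmod2_cases k1 with rfl|rfl <;>
      norm_num [sg_comp, show ((1:ZMod 2)+1) = 0 by decide, show (0:ZMod 2) ≠ 1 by decide, show (2:ZMod 2) ≠ 1 by decide, show (2:ZMod 2) = 0 by decide]
  rw [h1, h2]

/-- First alternativity identity on homogeneous pure tensors. -/
lemma gen1
    (hαe : EvenMap hA hA α) (hμe : EvenBil2 hA hA hA μ)
    (hassoc : ∀ x y z : A, μ (μ x y) (α z) = μ (α x) (μ y z))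
    (hcomm : ∀ (i j : ZMod 2) (x y : A), x ∈ hA i → y ∈ hA j →
      μ x y = sg K i j • μ y x)
    (hα'e : EvenMap hB hB α') (hνe : EvenBil2 hB hB hB ν)
    (haltid : ∀ (i j k : ZMod 2) (x y z : B), x ∈ hB i → y ∈ hB j → z ∈ hB k →
      asc ν α' x y z + sg K i j • asc ν α' y x z = 0 ∧
      asc ν α' x y z + sg K j k • asc ν α' x z y = 0)
    (hm : ∀ (j k : ZMod 2) (x y : A) (a b : B), a ∈ hB j → y ∈ hA k →
      m (x ⊗ₜ[K] a) (y ⊗ₜ[K] b) = sg K j k • ((μ x y) ⊗ₜ[K] (ν a b)))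
    (i1 i2 j1 j2 k1 k2 : ZMod 2) (x y z : A) (a b c : B)
    (hx : x ∈ hA i1) (ha : a ∈ hB i2) (hy : y ∈ hA j1) (hb : b ∈ hB j2)
    (hz : z ∈ hA k1) (hc : c ∈ hB k2) :
    asc m (TensorProduct.map α α') (x ⊗ₜ[K] a) (y ⊗ₜ[K] b) (z ⊗ₜ[K] c)
      + sg K (i1 + i2) (j1 + j2) •
        asc m (TensorProduct.map α α') (y ⊗ₜ[K] b) (x ⊗ₜ[K] a) (z ⊗ₜ[K] c) = 0 := by
  rw [asc_pure hA hB μ α ν α' m hαe hμe hassoc hα'e hνe hm i2 j1 j2 k1 x y z a b c ha hy hb hz,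
    asc_pure hA hB μ α ν α' m hαe hμe hassoc hα'e hνe hm j2 i1 i2 k1 y x z b a c hb hx ha hz]
  have hX : μ (α y) (μ x z) = sg K j1 i1 • μ (α x) (μ y z) := by
    rw [← hassoc y x z, hcomm j1 i1 y x hy hx, map_smul, LinearMap.smul_apply, hassoc]
  have hQ : asc ν α' b a c = -(sg K i2 j2 • asc ν α' a b c) := by
    have h0 := (haltid i2 j2 k2 a b c ha hb hc).1
    have hss : sg K i2 j2 * sg K i2 j2 = 1 := by
      rcases zmod2_cases i2 with rfl|rfl <;> rcases zmod2_cases j2 with rfl|rfl <;>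
        norm_num [sg_comp, show (0:ZMod 2) ≠ 1 by decide]
    calc asc ν α' b a c = (sg K i2 j2 * sg K i2 j2) • asc ν α' b a c := by
          rw [hss, one_smul]
      _ = sg K i2 j2 • (sg K i2 j2 • asc ν α' b a c) := mul_smul _ _ _
      _ = sg K i2 j2 • (-asc ν α' a b c) := by rw [eq_neg_of_add_eq_zero_right h0]
      _ = -(sg K i2 j2 • asc ν α' a b c) := smul_neg _ _
  rw [hX, hQ]
  simp only [TensorProduct.smul_tmul', TensorProduct.tmul_smul, TensorProduct.tmul_neg,
    smul_neg, smul_smul, ← neg_smul]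
  have hs : sg K i2 j1 * sg K i2 k1 * sg K j2 k1 +
      sg K (i1 + i2) (j1 + j2) * (sg K j2 i1 * sg K j2 k1 * sg K i2 k1 * (-sg K i2 j2 * sg K j1 i1))
      = 0 := by
    rcases zmod2_cases i1 with rfl|rfl <;> rcases zmod2_cases i2 with rfl|rfl <;>
      rcases zmod2_cases j1 with rfl|rfl <;> rcases zmod2_cases j2 with rfl|rfl <;>
      rcases zmod2_cases k1 with rfl|rfl <;>
      norm_num [sg_comp, show ((1:ZMod 2)+1) = 0 by decide, show (0:ZMod 2) ≠ 1 by decide,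
        show (2:ZMod 2) ≠ 1 by decide, show (2:ZMod 2) = 0 by decide]
  rw [← TensorProduct.add_tmul, ← add_smul, hs, zero_smul, TensorProduct.zero_tmul]

/-- Second alternativity identity on homogeneous pure tensors. -/
lemma gen2
    (hαe : EvenMap hA hA α) (hμe : EvenBil2 hA hA hA μ)
    (hassoc : ∀ x y z : A, μ (μ x y) (α z) = μ (α x) (μ y z))
    (hcomm : ∀ (i j : ZMod 2) (x y : A), x ∈ hA i → y ∈ hA j →
      μ x y = sg K i j • μ y x)
    (hα'e : EvenMap hB hB α') (hνe : EvenBil2 hB hB hB ν)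
    (haltid : ∀ (i j k : ZMod 2) (x y z : B), x ∈ hB i → y ∈ hB j → z ∈ hB k →
      asc ν α' x y z + sg K i j • asc ν α' y x z = 0 ∧
      asc ν α' x y z + sg K j k • asc ν α' x z y = 0)
    (hm : ∀ (j k : ZMod 2) (x y : A) (a b : B), a ∈ hB j → y ∈ hA k →
      m (x ⊗ₜ[K] a) (y ⊗ₜ[K] b) = sg K j k • ((μ x y) ⊗ₜ[K] (ν a b)))
    (i1 i2 j1 j2 k1 k2 : ZMod 2) (x y z : A) (a b c : B)
    (hx : x ∈ hA i1) (ha : a ∈ hB i2) (hy : y ∈ hA j1) (hb : b ∈ hB j2)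
    (hz : z ∈ hA k1) (hc : c ∈ hB k2) :
    asc m (TensorProduct.map α α') (x ⊗ₜ[K] a) (y ⊗ₜ[K] b) (z ⊗ₜ[K] c)
      + sg K (j1 + j2) (k1 + k2) •
        asc m (TensorProduct.map α α') (x ⊗ₜ[K] a) (z ⊗ₜ[K] c) (y ⊗ₜ[K] b) = 0 := by
  rw [asc_pure hA hB μ α ν α' m hαe hμe hassoc hα'e hνe hm i2 j1 j2 k1 x y z a b c ha hy hb hz,
    asc_pure hA hB μ α ν α' m hαe hμe hassoc hα'e hνe hm i2 k1 k2 j1 x z y a c b ha hz hc hy]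
  have hX : μ (α x) (μ z y) = sg K k1 j1 • μ (α x) (μ y z) := by
    rw [hcomm k1 j1 z y hz hy, map_smul]
  have hQ : asc ν α' a c b = -(sg K j2 k2 • asc ν α' a b c) := by
    have h0 := (haltid i2 j2 k2 a b c ha hb hc).2
    have hss : sg K j2 k2 * sg K j2 k2 = 1 := by
      rcases zmod2_cases j2 with rfl|rfl <;> rcases zmod2_cases k2 with rfl|rfl <;>
        norm_num [sg_comp, show (0:ZMod 2) ≠ 1 by decide]
    calc asc ν α' a c b = (sg K j2 k2 * sg K j2 k2) • asc ν α' a c b := by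
          rw [hss, one_smul]
      _ = sg K j2 k2 • (sg K j2 k2 • asc ν α' a c b) := mul_smul _ _ _
      _ = sg K j2 k2 • (-asc ν α' a b c) := by rw [eq_neg_of_add_eq_zero_right h0]
      _ = -(sg K j2 k2 • asc ν α' a b c) := smul_neg _ _
  rw [hX, hQ]
  simp only [TensorProduct.smul_tmul', TensorProduct.tmul_smul, TensorProduct.tmul_neg,
    smul_neg, smul_smul, ← neg_smul]
  have hs : sg K i2 j1 * sg K i2 k1 * sg K j2 k1 +
      sg K (j1 + j2) (k1 + k2) * (sg K i2 k1 * sg K i2 j1 * sg K k2 j1 * (-sg K j2 k2 * sg K k1 j1))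
      = 0 := by
    rcases zmod2_cases i2 with rfl|rfl <;> rcases zmod2_cases j1 with rfl|rfl <;>
      rcases zmod2_cases j2 with rfl|rfl <;> rcases zmod2_cases k1 with rfl|rfl <;>
      rcases zmod2_cases k2 with rfl|rfl <;>
      norm_num [sg_comp, show ((1:ZMod 2)+1) = 0 by decide, show (0:ZMod 2) ≠ 1 by decide,
        show (2:ZMod 2) ≠ 1 by decide, show (2:ZMod 2) = 0 by decide]
  rw [← TensorProduct.add_tmul, ← add_smul, hs, zero_smul, TensorProduct.zero_tmul]

end Main

theorem stmt1 (hA : ZMod 2 → Submodule K A) (hB : ZMod 2 → Submodule K B)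
    (μ : A →ₗ[K] A →ₗ[K] A) (α : A →ₗ[K] A)
    (ν : B →ₗ[K] B →ₗ[K] B) (α' : B →ₗ[K] B)
    (hαe : EvenMap hA hA α) (hμe : EvenBil2 hA hA hA μ)
    (hassoc : ∀ x y z : A, μ (μ x y) (α z) = μ (α x) (μ y z))
    (hcomm : ∀ (i j : ZMod 2) (x y : A), x ∈ hA i → y ∈ hA j →
      μ x y = sg K i j • μ y x)
    (halt : IsHomAltSuper hB ν α')
    (m : (A ⊗[K] B) →ₗ[K] (A ⊗[K] B) →ₗ[K] (A ⊗[K] B))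
    (hm : ∀ (j k : ZMod 2) (x y : A) (a b : B), a ∈ hB j → y ∈ hA k →
      m (x ⊗ₜ[K] a) (y ⊗ₜ[K] b) = sg K j k • ((μ x y) ⊗ₜ[K] (ν a b))) :
    IsHomAltSuper
      (fun p => Submodule.span K {t : A ⊗[K] B | ∃ (i j : ZMod 2) (x : A) (a : B),
        i + j = p ∧ x ∈ hA i ∧ a ∈ hB j ∧ t = x ⊗ₜ[K] a})
      m (TensorProduct.map α α') := by
  obtain ⟨hα'e, hνe, haltid⟩ := halt
  refine ⟨?_, ?_, ?_⟩
  · intro p t ht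
    induction ht using Submodule.span_induction with
    | mem t h =>
      obtain ⟨i, j, x, a, hij, hx, ha, rfl⟩ := h
      exact Submodule.subset_span ⟨i, j, α x, α' a, hij, hαe i x hx, hα'e j a ha,
        (TensorProduct.map_tmul α α' x a).symm⟩
    | zero => simp
    | add u v hu hv ihu ihv => rw [map_add]; exact Submodule.add_mem _ ihu ihv
    | smul r u hu ihu => rw [map_smul]; exact Submodule.smul_mem _ _ ihu
  · intro p q t u ht hu
    induction ht using Submodule.span_induction with
    | mem t h =>
      induction hu using Submodule.span_induction with
      | mem u h' =>
        obtain ⟨i1, i2, x, a, rfl, hx, ha, rfl⟩ := h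
        obtain ⟨j1, j2, y, b, rfl, hy, hb, rfl⟩ := h'
        rw [hm i2 j1 x y a b ha hy]
        refine Submodule.smul_mem _ _ (Submodule.subset_span
          ⟨i1 + j1, i2 + j2, μ x y, ν a b, ?_, hμe i1 j1 x y hx hy, hνe i2 j2 a b ha hb, rfl⟩)
        ring
      | zero => simp
      | add u v hu hv ihu ihv => rw [map_add]; exact Submodule.add_mem _ ihu ihv
      | smul r u hu ihu => rw [map_smul]; exact Submodule.smul_mem _ _ ihu
    | zero => simp
    | add t t' h h' ih ih' =>
      rw [map_add, LinearMap.add_apply]; exact Submodule.add_mem _ ih ih'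
    | smul r t h ih =>
      rw [map_smul, LinearMap.smul_apply]; exact Submodule.smul_mem _ _ ih
  · intro i j k t u v ht hu hv
    constructor
    · induction ht using Submodule.span_induction with
      | mem t h =>
        induction hu using Submodule.span_induction with
        | mem u h' =>
          induction hv using Submodule.span_induction with
          | mem v h'' =>
            obtain ⟨i1, i2, x, a, rfl, hx, ha, rfl⟩ := h
            obtain ⟨j1, j2, y, b, rfl, hy, hb, rfl⟩ := h'
            obtain ⟨k1, k2, z, c, rfl, hz, hc, rfl⟩ := h''
            exact gen1 hA hB μ α ν α' m hαe hμe hassoc hcomm hα'e hνe haltid hm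
              i1 i2 j1 j2 k1 k2 x y z a b c hx ha hy hb hz hc
          | zero => rw [asc_zero3, asc_zero3, smul_zero, add_zero]
          | add w w' hw hw' ih ih' =>
            rw [asc_add3, asc_add3, smul_add, add_add_add_comm, ih, ih', add_zero]
          | smul r w hw ih =>
            rw [asc_smul3, asc_smul3, smul_comm (sg K i j) r, ← smul_add, ih, smul_zero]
        | zero => rw [asc_zero2, asc_zero1, smul_zero, add_zero]
        | add w w' hw hw' ih ih' =>
          rw [asc_add2, asc_add1, smul_add, add_add_add_comm, ih, ih', add_zero]
        | smul r w hw ih =>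
          rw [asc_smul2, asc_smul1, smul_comm (sg K i j) r, ← smul_add, ih, smul_zero]
      | zero => rw [asc_zero1, asc_zero2, smul_zero, add_zero]
      | add w w' hw hw' ih ih' =>
        rw [asc_add1, asc_add2, smul_add, add_add_add_comm, ih, ih', add_zero]
      | smul r w hw ih =>
        rw [asc_smul1, asc_smul2, smul_comm (sg K i j) r, ← smul_add, ih, smul_zero]
    · induction ht using Submodule.span_induction with
      | mem t h =>
        induction hu using Submodule.span_induction with
        | mem u h' =>
          induction hv using Submodule.span_induction with
          | mem v h'' =>
            obtain ⟨i1, i2, x, a, rfl, hx, ha, rfl⟩ := h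
            obtain ⟨j1, j2, y, b, rfl, hy, hb, rfl⟩ := h'
            obtain ⟨k1, k2, z, c, rfl, hz, hc, rfl⟩ := h''
            exact gen2 hA hB μ α ν α' m hαe hμe hassoc hcomm hα'e hνe haltid hm
              i1 i2 j1 j2 k1 k2 x y z a b c hx ha hy hb hz hc
          | zero => rw [asc_zero3, asc_zero2, smul_zero, add_zero]
          | add w w' hw hw' ih ih' =>
            rw [asc_add3, asc_add2, smul_add, add_add_add_comm, ih, ih', add_zero]
          | smul r w hw ih =>
            rw [asc_smul3, asc_smul2, smul_comm (sg K j k) r, ← smul_add, ih, smul_zero]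
        | zero => rw [asc_zero2, asc_zero3, smul_zero, add_zero]
        | add w w' hw hw' ih ih' =>
          rw [asc_add2, asc_add3, smul_add, add_add_add_comm, ih, ih', add_zero]
        | smul r w hw ih =>
          rw [asc_smul2, asc_smul3, smul_comm (sg K j k) r, ← smul_add, ih, smul_zero]
      | zero => rw [asc_zero1, asc_zero1, smul_zero, add_zero]
      | add w w' hw hw' ih ih' =>
        rw [asc_add1, asc_add1, smul_add, add_add_add_comm, ih, ih', add_zero]
      | smul r w hw ih =>
        rw [asc_smul1, asc_smul1, smul_comm (sg K j k) r, ← smul_add, ih, smul_zero]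
end

section
/- Let (A, ·, α) be a Hom-alternative superalgebra and β : A → A an even linear map in the centroid of A (i.e., β(x·y) = β(x)·y = x·β(y) for all homogeneous x,y, and β commutes with α). Then (A, ·_β, α) with x ·_β y = β(x·y) is a Hom-alternative superalgebra. -/
open LinearMap
open scoped TensorProduct

variable {K : Type*} [Field K]
variable {A B V : Type*} [AddCommGroup A] [Module K A]
  [AddCommGroup B] [Module K B] [AddCommGroup V] [Module K V]

theorem stmt2 (h : ZMod 2 → Submodule K A) (μ : A →ₗ[K] A →ₗ[K] A)
    (α β : A →ₗ[K] A)
    (halt : IsHomAltSuper h μ α) (hβe : EvenMap h h β)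
    (hcomm : ∀ x : A, β (α x) = α (β x))
    (hcent : ∀ (i j : ZMod 2) (x y : A), x ∈ h i → y ∈ h j →
      β (μ x y) = μ (β x) y ∧ β (μ x y) = μ x (β y)) :
    IsHomAltSuper h (μ.compr₂ β) α := by
  obtain ⟨hαe, hμe, hid⟩ := halt
  have key : ∀ (i j k : ZMod 2) (x y z : A), x ∈ h i → y ∈ h j → z ∈ h k →
      asc (μ.compr₂ β) α x y z = β (β (asc μ α x y z)) := by
    intro i j k x y z hx hy hz
    simp only [asc, LinearMap.compr₂_apply, map_sub]
    have h1 : μ (β (μ x y)) (α z) = β (μ (μ x y) (α z)) :=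
      ((hcent (i+j) k _ _ (hμe i j x y hx hy) (hαe k z hz)).1).symm
    have h2 : μ (α x) (β (μ y z)) = β (μ (α x) (μ y z)) :=
      ((hcent i (j+k) _ _ (hαe i x hx) (hμe j k y z hy hz)).2).symm
    rw [h1, h2]
  refine ⟨hαe, ?_, ?_⟩
  · intro i j x y hx hy
    exact hβe _ _ (hμe i j x y hx hy)
  · intro i j k x y z hx hy hz
    obtain ⟨e1, e2⟩ := hid i j k x y z hx hy hz
    constructor
    · rw [key i j k x y z hx hy hz, key j i k y x z hy hx hz, ← map_smul, ← map_smul,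
        ← map_add, ← map_add, e1]
      simp
    · rw [key i j k x y z hx hy hz, key i k j x z y hx hz hy, ← map_smul, ← map_smul,
        ← map_add, ← map_add, e2]
      simp
end

section
/- Let (A, ≺, ≻, α) be a Hom-prealternative superalgebra. Then the product x ∘ y := x≺y + x≻y makes (A, ∘, α) into a Hom-alternative superalgebra. -/
open LinearMap
open scoped TensorProduct

variable {K : Type*} [Field K]
variable {A B V : Type*} [AddCommGroup A] [Module K A]
  [AddCommGroup B] [Module K B] [AddCommGroup V] [Module K V]

/-- Hom-prealternative superalgebra. -/
def IsHomPreAltSuper (h : ZMod 2 → Submodule K A)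
    (pre suc : A →ₗ[K] A →ₗ[K] A) (α : A →ₗ[K] A) : Prop :=
  EvenMap h h α ∧ EvenBil2 h h h pre ∧ EvenBil2 h h h suc ∧
  ∀ (i j k : ZMod 2) (x y z : A), x ∈ h i → y ∈ h j → z ∈ h k →
    (suc (pre x y + suc x y) (α z) - suc (α x) (suc y z)
      + sg K i j • suc (pre y x + suc y x) (α z)
      - sg K i j • suc (α y) (suc x z) = 0) ∧
    (pre (pre x y) (α z) - pre (α x) (pre y z + suc y z)
      + sg K j k • pre (pre x z) (α y)
      - sg K j k • pre (α x) (pre z y + suc z y) = 0) ∧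
    (pre (suc x y) (α z) - suc (α x) (pre y z)
      + sg K i j • pre (pre y x) (α z)
      - sg K i j • pre (α y) (pre x z + suc x z) = 0) ∧
    (pre (suc x y) (α z) - suc (α x) (pre y z)
      + sg K j k • suc (pre x z + suc x z) (α y)
      - sg K j k • suc (α x) (suc z y) = 0)


lemma sg_comm {R : Type*} [Field R] (i j : ZMod 2) : sg R i j = sg R j i := by
  simp [sg, mul_comm]

lemma sg_sq {R : Type*} [Field R] (i j : ZMod 2) : sg R i j * sg R i j = 1 := by
  unfold sg; rw [← pow_add]; exact Even.neg_one_pow ⟨_, rfl⟩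

theorem stmt4 (h : ZMod 2 → Submodule K A) (pre suc : A →ₗ[K] A →ₗ[K] A)
    (α : A →ₗ[K] A) (hp : IsHomPreAltSuper h pre suc α) :
    IsHomAltSuper h (pre + suc) α := by
  obtain ⟨ha, hpre, hsuc, hq⟩ := hp
  refine ⟨ha, ?_, ?_⟩
  · intro i j x y hx hy
    simpa using add_mem (hpre i j x y hx hy) (hsuc i j x y hx hy)
  · intro i j k x y z hx hy hz
    obtain ⟨e1, e2, e3, e4⟩ := hq i j k x y z hx hy hz
    obtain ⟨-, -, e3', -⟩ := hq j i k y x z hy hx hz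
    obtain ⟨-, -, -, e4'⟩ := hq i k j x z y hx hz hy
    rw [← sg_comm] at e3'
    rw [← sg_comm j k] at e4'
    have e3s := congrArg (fun v => sg K i j • v) e3'
    have e4s := congrArg (fun v => sg K j k • v) e4'
    simp only [smul_add, smul_sub, smul_smul, sg_sq, one_smul, smul_zero] at e3s e4s
    simp only [asc, map_add, LinearMap.add_apply, smul_add, smul_sub] at e1 e2 e3 e4 e3s e4s ⊢
    constructor
    · linear_combination (norm := module) e1 + e3 + e3s
    · linear_combination (norm := module) e2 + e4 + e4s
end

section
/- Let (A, ≺, ≻, α) be a Hom-prealternative superalgebra. Define new products x ≺' y := (-1)^{|x||y|} y≻x and x ≻' y := (-1)^{|x||y|} y≺x. Then (A, ≺', ≻', α) is also a Hom-prealternative superalgebra. -/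
open LinearMap
open scoped TensorProduct

variable {K : Type*} [Field K]
variable {A B V : Type*} [AddCommGroup A] [Module K A]
  [AddCommGroup B] [Module K B] [AddCommGroup V] [Module K V]

set_option maxHeartbeats 3200000 in
theorem stmt5 (h : ZMod 2 → Submodule K A) (pre suc pre' suc' : A →ₗ[K] A →ₗ[K] A)
    (α : A →ₗ[K] A) (hp : IsHomPreAltSuper h pre suc α)
    (hpre' : ∀ (i j : ZMod 2) (x y : A), x ∈ h i → y ∈ h j →
      pre' x y = sg K i j • suc y x)
    (hsuc' : ∀ (i j : ZMod 2) (x y : A), x ∈ h i → y ∈ h j →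
      suc' x y = sg K i j • pre y x) :
    IsHomPreAltSuper h pre' suc' α := by
  obtain ⟨hα, hpreh, hsuch, hax⟩ := hp
  refine ⟨hα, ?_, ?_, ?_⟩
  · intro i j x y hx hy
    rw [hpre' i j x y hx hy]
    have m := hsuch j i y x hy hx
    rw [add_comm j i] at m
    exact Submodule.smul_mem _ _ m
  · intro i j x y hx hy
    rw [hsuc' i j x y hx hy]
    have m := hpreh j i y x hy hx
    rw [add_comm j i] at m
    exact Submodule.smul_mem _ _ m
  · intro i j k x y z hx hy hz
    have hαx := hα i x hx
    have hαy := hα j y hy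
    have hαz := hα k z hz
    have hyx_s := hsuch j i y x hy hx
    have hyx_p := hpreh j i y x hy hx
    have hxy_s := hsuch i j x y hx hy
    have hxy_p := hpreh i j x y hx hy
    have hzy_s := hsuch k j z y hz hy
    have hzy_p := hpreh k j z y hz hy
    have hzx_s := hsuch k i z x hz hx
    have hzx_p := hpreh k i z x hz hx
    have hyz_s := hsuch j k y z hy hz
    have hyz_p := hpreh j k y z hy hz
    simp only [hpre' i j x y hx hy, hsuc' i j x y hx hy,
      hpre' j i y x hy hx, hsuc' j i y x hy hx,
      hpre' i k x z hx hz, hsuc' i k x z hx hz,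
      hpre' k i z x hz hx, hsuc' k i z x hz hx,
      hpre' j k y z hy hz, hsuc' j k y z hy hz,
      hpre' k j z y hz hy, hsuc' k j z y hz hy]
    simp only [map_add, map_smul, LinearMap.add_apply, LinearMap.smul_apply, smul_add]
    simp only [hsuc' (j+i) k (suc y x) (α z) hyx_s hαz,
      hsuc' (j+i) k (pre y x) (α z) hyx_p hαz,
      hsuc' (i+j) k (suc x y) (α z) hxy_s hαz,
      hsuc' (i+j) k (pre x y) (α z) hxy_p hαz,
      hpre' (j+i) k (suc y x) (α z) hyx_s hαz,
      hpre' (j+i) k (pre y x) (α z) hyx_p hαz,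
      hpre' (i+j) k (suc x y) (α z) hxy_s hαz,
      hpre' (i+j) k (pre x y) (α z) hxy_p hαz,
      hsuc' (k+i) j (suc z x) (α y) hzx_s hαy,
      hsuc' (k+i) j (pre z x) (α y) hzx_p hαy,
      hpre' (k+i) j (suc z x) (α y) hzx_s hαy,
      hpre' (k+i) j (pre z x) (α y) hzx_p hαy,
      hsuc' i (k+j) (α x) (suc z y) hαx hzy_s,
      hsuc' i (k+j) (α x) (pre z y) hαx hzy_p,
      hpre' i (k+j) (α x) (suc z y) hαx hzy_s,
      hpre' i (k+j) (α x) (pre z y) hαx hzy_p,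
      hsuc' i (j+k) (α x) (suc y z) hαx hyz_s,
      hsuc' i (j+k) (α x) (pre y z) hαx hyz_p,
      hpre' i (j+k) (α x) (suc y z) hαx hyz_s,
      hpre' i (j+k) (α x) (pre y z) hαx hyz_p,
      hsuc' j (k+i) (α y) (suc z x) hαy hzx_s,
      hsuc' j (k+i) (α y) (pre z x) hαy hzx_p,
      hpre' j (k+i) (α y) (suc z x) hαy hzx_s,
      hpre' j (k+i) (α y) (pre z x) hαy hzx_p]
    have v0 : (0 : ZMod 2).val = 0 := rfl
    have v1 : (1 : ZMod 2).val = 1 := rfl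
    have v2 : (2 : ZMod 2).val = 0 := rfl
    have z2 : ∀ a : ZMod 2, a = 0 ∨ a = 1 := by decide
    have key := hax k j i z y x hz hy hx
    refine ⟨?_, ?_, ?_, ?_⟩
    · have k2 := key.2.1
      rcases z2 i with rfl | rfl <;> rcases z2 j with rfl | rfl <;> rcases z2 k with rfl | rfl <;>
        norm_num [sg, v0, v1, v2] at k2 ⊢ <;>
        first
        | linear_combination (norm := module) (1 : K) • k2
        | linear_combination (norm := module) (-1 : K) • k2
    · have k1 := key.1
      rcases z2 i with rfl | rfl <;> rcases z2 j with rfl | rfl <;> rcases z2 k with rfl | rfl <;>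
        norm_num [sg, v0, v1, v2] at k1 ⊢ <;>
        first
        | linear_combination (norm := module) (1 : K) • k1
        | linear_combination (norm := module) (-1 : K) • k1
    · have k4 := key.2.2.2
      rcases z2 i with rfl | rfl <;> rcases z2 j with rfl | rfl <;> rcases z2 k with rfl | rfl <;>
        norm_num [sg, v0, v1, v2] at k4 ⊢ <;>
        first
        | linear_combination (norm := module) (1 : K) • k4
        | linear_combination (norm := module) (-1 : K) • k4
    · have k3 := key.2.2.1
      rcases z2 i with rfl | rfl <;> rcases z2 j with rfl | rfl <;> rcases z2 k with rfl | rfl <;>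
        norm_num [sg, v0, v1, v2] at k3 ⊢ <;>
        first
        | linear_combination (norm := module) (1 : K) • k3
        | linear_combination (norm := module) (-1 : K) • k3
end

section
/- Let (A, ≺, ≻, α) be a left Hom-prealternative superalgebra (resp. right Hom-prealternative superalgebra), i.e., the three associator-type expressions (x,y,z)_1 = (x∘y)≻α(z) - α(x)≻(y≻z), (x,y,z)_2 = (x≻y)≺α(z) - α(x)≻(y≺z), (x,y,z)_3 = (x≺y)≺α(z) - α(x)≺(y∘z) each satisfy (x,y,z)_i + (-1)^{|x||y|}(y,x,z)_i = 0 (resp. (x,y,z)_i + (-1)^{|y||z|}(x,z,y)_i = 0). Then (A, ∘, α) with x∘y = x≺y + x≻y is a left (resp. right) Hom-alternative superalgebra. -/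
open LinearMap
open scoped TensorProduct

variable {K : Type*} [Field K]
variable {A B V : Type*} [AddCommGroup A] [Module K A]
  [AddCommGroup B] [Module K B] [AddCommGroup V] [Module K V]

/-- The first associator-type expression `(x,y,z)_1 = (x∘y)≻α(z) - α(x)≻(y≻z)`. -/
def T1 (pre suc : A →ₗ[K] A →ₗ[K] A) (α : A →ₗ[K] A) (x y z : A) : A :=
  suc (pre x y + suc x y) (α z) - suc (α x) (suc y z)

/-- The second associator-type expression `(x,y,z)_2 = (x≻y)≺α(z) - α(x)≻(y≺z)`. -/
def T2 (pre suc : A →ₗ[K] A →ₗ[K] A) (α : A →ₗ[K] A) (x y z : A) : A :=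
  pre (suc x y) (α z) - suc (α x) (pre y z)

/-- The third associator-type expression `(x,y,z)_3 = (x≺y)≺α(z) - α(x)≺(y∘z)`. -/
def T3 (pre suc : A →ₗ[K] A →ₗ[K] A) (α : A →ₗ[K] A) (x y z : A) : A :=
  pre (pre x y) (α z) - pre (α x) (pre y z + suc y z)

lemma asc_eq_T (pre suc : A →ₗ[K] A →ₗ[K] A) (α : A →ₗ[K] A) (x y z : A) :
    asc (pre + suc) α x y z =
      T1 pre suc α x y z + T2 pre suc α x y z + T3 pre suc α x y z := by
  simp only [asc, T1, T2, T3, LinearMap.add_apply, map_add]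
  abel

theorem stmt7 (h : ZMod 2 → Submodule K A) (pre suc : A →ₗ[K] A →ₗ[K] A)
    (α : A →ₗ[K] A) (hαe : EvenMap h h α)
    (hpe : EvenBil2 h h h pre) (hse : EvenBil2 h h h suc) :
    ((∀ (i j k : ZMod 2) (x y z : A), x ∈ h i → y ∈ h j → z ∈ h k →
        T1 pre suc α x y z + sg K i j • T1 pre suc α y x z = 0 ∧
        T2 pre suc α x y z + sg K i j • T2 pre suc α y x z = 0 ∧
        T3 pre suc α x y z + sg K i j • T3 pre suc α y x z = 0) →
      ∀ (i j k : ZMod 2) (x y z : A), x ∈ h i → y ∈ h j → z ∈ h k →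
        asc (pre + suc) α x y z + sg K i j • asc (pre + suc) α y x z = 0)
    ∧
    ((∀ (i j k : ZMod 2) (x y z : A), x ∈ h i → y ∈ h j → z ∈ h k →
        T1 pre suc α x y z + sg K j k • T1 pre suc α x z y = 0 ∧
        T2 pre suc α x y z + sg K j k • T2 pre suc α x z y = 0 ∧
        T3 pre suc α x y z + sg K j k • T3 pre suc α x z y = 0) →
      ∀ (i j k : ZMod 2) (x y z : A), x ∈ h i → y ∈ h j → z ∈ h k →
        asc (pre + suc) α x y z + sg K j k • asc (pre + suc) α x z y = 0) := by
  constructor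
  · intro H i j k x y z hx hy hz
    obtain ⟨h1, h2, h3⟩ := H i j k x y z hx hy hz
    rw [asc_eq_T, asc_eq_T, smul_add, smul_add]
    have : (T1 pre suc α x y z + sg K i j • T1 pre suc α y x z) +
        (T2 pre suc α x y z + sg K i j • T2 pre suc α y x z) +
        (T3 pre suc α x y z + sg K i j • T3 pre suc α y x z) = 0 := by
      rw [h1, h2, h3]; abel
    rw [← this]; abel
  · intro H i j k x y z hx hy hz
    obtain ⟨h1, h2, h3⟩ := H i j k x y z hx hy hz
    rw [asc_eq_T, asc_eq_T, smul_add, smul_add]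
    have : (T1 pre suc α x y z + sg K j k • T1 pre suc α x z y) +
        (T2 pre suc α x y z + sg K j k • T2 pre suc α x z y) +
        (T3 pre suc α x y z + sg K j k • T3 pre suc α x z y) = 0 := by
      rw [h1, h2, h3]; abel
    rw [← this]; abel
end

section
/- Let (A, ∘, α) be a Hom-alternative superalgebra, (V, L, R, β) a bimodule over A, and T : V → A an O-operator, i.e., an even linear map with T∘β = α∘T and T(u)∘T(v) = T(L(T(u))v + R(T(v))u) for all u,v ∈ V. Then V with products u ≺ v := R(T(v))u and u ≻ v := L(T(u))v and twisting map β is a Hom-prealternative superalgebra. -/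
open LinearMap
open scoped TensorProduct

variable {K : Type*} [Field K]
variable {A B V : Type*} [AddCommGroup A] [Module K A]
  [AddCommGroup B] [Module K B] [AddCommGroup V] [Module K V]

theorem stmt9 (hA : ZMod 2 → Submodule K A) (hV : ZMod 2 → Submodule K V)
    (μ : A →ₗ[K] A →ₗ[K] A) (α : A →ₗ[K] A)
    (L R : A →ₗ[K] V →ₗ[K] V) (β : V →ₗ[K] V) (T : V →ₗ[K] A)
    (halt : IsHomAltSuper hA μ α) (hbm : IsAltBimod hA hV μ α L R β)
    (hTe : EvenMap hV hA T)
    (hTβ : ∀ v : V, T (β v) = α (T v))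
    (hO : ∀ u v : V, μ (T u) (T v) = T (L (T u) v + R (T v) u)) :
    IsHomPreAltSuper hV ((R ∘ₗ T).flip) (L ∘ₗ T) β := by
  obtain ⟨hαe, hμe, _⟩ := halt
  obtain ⟨hβe, hLe, hRe, hbm'⟩ := hbm
  have sgsq : ∀ i j : ZMod 2, sg K i j * sg K i j = 1 := by
    intro i j; unfold sg; rw [← mul_pow]; norm_num
  have sgcomm : ∀ i j : ZMod 2, sg K i j = sg K j i := by
    intro i j; unfold sg; rw [mul_comm]
  have sgne : ∀ i j : ZMod 2, sg K i j ≠ 0 := by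
    intro i j; unfold sg; exact pow_ne_zero _ (by norm_num)
  refine ⟨hβe, ?_, ?_, ?_⟩
  · intro i j u v hu hv
    simpa [add_comm] using hRe j i (T v) u (hTe j v hv) hu
  · intro i j u v hu hv
    exact hLe i j (T u) v (hTe i u hu) hv
  intro i j k u v w hu hv hw
  have hTu := hTe i u hu
  have hTv := hTe j v hv
  have hTw := hTe k w hw
  refine ⟨?_, ?_, ?_, ?_⟩
  · have e3 := (hbm' i j k (T u) (T v) w hTu hTv hw).2.2.1
    rw [hO u v, hO v u] at e3
    simp only [LinearMap.flip_apply, LinearMap.comp_apply, map_add,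
      LinearMap.add_apply, hTβ] at e3 ⊢
    linear_combination (norm := module) e3
  · have e4 := (hbm' j k i (T v) (T w) u hTv hTw hu).2.2.2
    rw [hO v w, hO w v] at e4
    simp only [LinearMap.flip_apply, LinearMap.comp_apply, map_add,
      LinearMap.add_apply, hTβ] at e4 ⊢
    linear_combination (norm := module) -e4
  · have e1 := (hbm' i k j (T u) (T w) v hTu hTw hv).1
    rw [hO u w] at e1
    simp only [LinearMap.flip_apply, LinearMap.comp_apply, map_add,
      LinearMap.add_apply, hTβ] at e1 ⊢
    linear_combination (norm := skip) sg K i j • e1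
    match_scalars <;> simp [pow_two, sgsq]
  · have e2 := (hbm' k i j (T w) (T u) v hTw hTu hv).2.1
    rw [hO u w] at e2
    rw [sgcomm k j] at e2
    simp only [LinearMap.flip_apply, LinearMap.comp_apply, map_add,
      LinearMap.add_apply, hTβ] at e2 ⊢
    linear_combination (norm := module) -e2
end

section
/- Let (A, ·, α) be a Hom-alternative superalgebra and R : A → A a Rota-Baxter operator of weight 0 (even linear, R∘α = α∘R, and R(x)·R(y) = R(R(x)·y + x·R(y))). Then A with products x ≺ y := x·R(y) and x ≻ y := R(x)·y and the same twisting map α is a Hom-prealternative superalgebra. -/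
open LinearMap
open scoped TensorProduct

variable {K : Type*} [Field K]
variable {A B V : Type*} [AddCommGroup A] [Module K A]
  [AddCommGroup B] [Module K B] [AddCommGroup V] [Module K V]

theorem stmt10 (h : ZMod 2 → Submodule K A) (μ : A →ₗ[K] A →ₗ[K] A)
    (α Rb : A →ₗ[K] A)
    (halt : IsHomAltSuper h μ α) (hRe : EvenMap h h Rb)
    (hcomm : ∀ x : A, Rb (α x) = α (Rb x))
    (hRB : ∀ x y : A, μ (Rb x) (Rb y) = Rb (μ (Rb x) y + μ x (Rb y))) :
    IsHomPreAltSuper h (μ.compl₂ Rb) (μ ∘ₗ Rb) α := by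
  obtain ⟨hαe, hμe, halt'⟩ := halt
  have key : ∀ a b : A, Rb (μ a (Rb b) + μ (Rb a) b) = μ (Rb a) (Rb b) := fun a b => by
    rw [add_comm]; exact (hRB a b).symm
  refine ⟨hαe, ?_, ?_, ?_⟩
  · intro i j x y hx hy
    exact hμe i j x (Rb y) hx (hRe j y hy)
  · intro i j x y hx hy
    exact hμe i j (Rb x) y (hRe i x hx) hy
  · intro i j k x y z hx hy hz
    simp only [LinearMap.compl₂_apply, LinearMap.comp_apply]
    have h1 := (halt' i j k (Rb x) (Rb y) z (hRe i x hx) (hRe j y hy) hz).1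
    have h2 := (halt' i j k x (Rb y) (Rb z) hx (hRe j y hy) (hRe k z hz)).2
    have h3 := (halt' i j k (Rb x) y (Rb z) (hRe i x hx) hy (hRe k z hz)).1
    have h4 := (halt' i j k (Rb x) y (Rb z) (hRe i x hx) hy (hRe k z hz)).2
    simp only [asc] at h1 h2 h3 h4
    refine ⟨?_, ?_, ?_, ?_⟩
    · rw [key x y, key y x, hcomm x, hcomm y]
      linear_combination (norm := module) h1
    · rw [key y z, key z y, hcomm z, hcomm y]
      linear_combination (norm := module) h2
    · rw [key x z, hcomm z, hcomm x]
      rw [smul_sub, ← add_sub_assoc] at h3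
      exact h3
    · rw [key x z, hcomm z, hcomm x]
      linear_combination (norm := module) h4
end

section
/- Let (A, ·, α) be a Hom-alternative superalgebra and R : A → A a Rota-Baxter operator of weight 0. Then A with the new product x ∘ y := R(x)·y + x·R(y) and the same map α is a Hom-alternative superalgebra. -/
open LinearMap
open scoped TensorProduct

variable {K : Type*} [Field K]
variable {A B V : Type*} [AddCommGroup A] [Module K A]
  [AddCommGroup B] [Module K B] [AddCommGroup V] [Module K V]

theorem stmt11 (h : ZMod 2 → Submodule K A) (μ : A →ₗ[K] A →ₗ[K] A)
    (α Rb : A →ₗ[K] A)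
    (halt : IsHomAltSuper h μ α) (hRe : EvenMap h h Rb)
    (hcomm : ∀ x : A, Rb (α x) = α (Rb x))
    (hRB : ∀ x y : A, μ (Rb x) (Rb y) = Rb (μ (Rb x) y + μ x (Rb y))) :
    IsHomAltSuper h (μ ∘ₗ Rb + μ.compl₂ Rb) α := by
  obtain ⟨hα, hμ, halt'⟩ := halt
  have hμ'app : ∀ x y : A, (μ ∘ₗ Rb + μ.compl₂ Rb) x y = μ (Rb x) y + μ x (Rb y) := by
    intro x y; simp
  have key : ∀ x y z : A, asc (μ ∘ₗ Rb + μ.compl₂ Rb) α x y z =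
      asc μ α (Rb x) (Rb y) z + asc μ α (Rb x) y (Rb z) + asc μ α x (Rb y) (Rb z) := by
    intro x y z
    simp only [asc, hμ'app]
    rw [← hRB x y, ← hRB y z, hcomm, hcomm]
    simp only [map_add, LinearMap.add_apply]
    abel
  refine ⟨hα, ?_, ?_⟩
  · intro i j x y hx hy
    rw [hμ'app]
    exact Submodule.add_mem _ (hμ i j _ _ (hRe i x hx) hy) (hμ i j _ _ hx (hRe j y hy))
  · intro i j k x y z hx hy hz
    have hx' := hRe i x hx
    have hy' := hRe j y hy
    have hz' := hRe k z hz
    constructor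
    · have e1 := (halt' i j k _ _ _ hx' hy' hz).1
      have e2 := (halt' i j k _ _ _ hx' hy hz').1
      have e3 := (halt' i j k _ _ _ hx hy' hz').1
      rw [key, key, smul_add, smul_add]
      calc asc μ α (Rb x) (Rb y) z + asc μ α (Rb x) y (Rb z) + asc μ α x (Rb y) (Rb z) +
            (sg K i j • asc μ α (Rb y) (Rb x) z + sg K i j • asc μ α (Rb y) x (Rb z) +
              sg K i j • asc μ α y (Rb x) (Rb z))
          = (asc μ α (Rb x) (Rb y) z + sg K i j • asc μ α (Rb y) (Rb x) z) +
            (asc μ α (Rb x) y (Rb z) + sg K i j • asc μ α y (Rb x) (Rb z)) +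
            (asc μ α x (Rb y) (Rb z) + sg K i j • asc μ α (Rb y) x (Rb z)) := by abel
        _ = 0 := by rw [e1, e2, e3]; simp
    · have e1 := (halt' i j k _ _ _ hx' hy' hz).2
      have e2 := (halt' i j k _ _ _ hx' hy hz').2
      have e3 := (halt' i j k _ _ _ hx hy' hz').2
      rw [key, key, smul_add, smul_add]
      calc asc μ α (Rb x) (Rb y) z + asc μ α (Rb x) y (Rb z) + asc μ α x (Rb y) (Rb z) +
            (sg K j k • asc μ α (Rb x) (Rb z) y + sg K j k • asc μ α (Rb x) z (Rb y) +
              sg K j k • asc μ α x (Rb z) (Rb y))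
          = (asc μ α (Rb x) (Rb y) z + sg K j k • asc μ α (Rb x) z (Rb y)) +
            (asc μ α (Rb x) y (Rb z) + sg K j k • asc μ α (Rb x) (Rb z) y) +
            (asc μ α x (Rb y) (Rb z) + sg K j k • asc μ α x (Rb z) (Rb y)) := by abel
        _ = 0 := by rw [e1, e2, e3]; simp
end

section
/- Let (V, ≺, ≻, β) be a bimodule over the Hom-alternative superalgebra (A, ·, α) and R : A → A a Rota-Baxter operator of weight 0. Define v ◁ x := v ≺ R(x) and x ▷ v := R(x) ≻ v. Then (V, ▷, ◁, β) is a bimodule over the Hom-alternative superalgebra (A, ∘, α) with x∘y = R(x)·y + x·R(y). -/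
open LinearMap
open scoped TensorProduct

variable {K : Type*} [Field K]
variable {A B V : Type*} [AddCommGroup A] [Module K A]
  [AddCommGroup B] [Module K B] [AddCommGroup V] [Module K V]

theorem stmt12 (hA : ZMod 2 → Submodule K A) (hV : ZMod 2 → Submodule K V)
    (μ : A →ₗ[K] A →ₗ[K] A) (α Rb : A →ₗ[K] A)
    (L R : A →ₗ[K] V →ₗ[K] V) (β : V →ₗ[K] V)
    (halt : IsHomAltSuper hA μ α) (hbm : IsAltBimod hA hV μ α L R β)
    (hRe : EvenMap hA hA Rb)
    (hcomm : ∀ x : A, Rb (α x) = α (Rb x))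
    (hRB : ∀ x y : A, μ (Rb x) (Rb y) = Rb (μ (Rb x) y + μ x (Rb y))) :
    IsAltBimod hA hV (μ ∘ₗ Rb + μ.compl₂ Rb) α (L ∘ₗ Rb) (R ∘ₗ Rb) β := by
  obtain ⟨hβ, hLe, hRe', hax⟩ := hbm
  refine ⟨hβ, ?_, ?_, ?_⟩
  · intro i j x v hx hv
    exact hLe i j _ v (hRe i x hx) hv
  · intro i j x v hx hv
    exact hRe' i j _ v (hRe i x hx) hv
  · intro i j p x y v hx hy hv
    obtain ⟨h1, h2, h3, h4⟩ := hax i j p (Rb x) (Rb y) v (hRe i x hx) (hRe j y hy) hv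
    simp only [hRB] at h1 h2 h3 h4
    refine ⟨?_, ?_, ?_, ?_⟩
    · simpa [hcomm] using h1
    · simpa [hcomm] using h2
    · simpa [hcomm] using h3
    · simpa [hcomm] using h4
end

section
/- Let (A, ≺, ≻, α) be a multiplicative Hom-prealternative superalgebra. Then for each n ≥ 0, the nth derived algebra A^n = (A, α^{2^n-1}∘≺, α^{2^n-1}∘≻, α^{2^n}) is a multiplicative Hom-prealternative superalgebra. -/
open LinearMap
open scoped TensorProduct

variable {K : Type*} [Field K]
variable {A B V : Type*} [AddCommGroup A] [Module K A]
  [AddCommGroup B] [Module K B] [AddCommGroup V] [Module K V]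

/-- Multiplicativity for a Hom-prealternative superalgebra. -/
def PreMult (pre suc : A →ₗ[K] A →ₗ[K] A) (α : A →ₗ[K] A) : Prop :=
  (∀ x y : A, α (pre x y) = pre (α x) (α y)) ∧
  (∀ x y : A, α (suc x y) = suc (α x) (α y))

theorem stmt14 (h : ZMod 2 → Submodule K A) (pre suc : A →ₗ[K] A →ₗ[K] A)
    (α : A →ₗ[K] A)
    (hp : IsHomPreAltSuper h pre suc α) (hmul : PreMult pre suc α) :
    ∀ n : ℕ,
      IsHomPreAltSuper h (pre.compr₂ (α ^ (2 ^ n - 1)))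
        (suc.compr₂ (α ^ (2 ^ n - 1))) (α ^ (2 ^ n)) ∧
      PreMult (pre.compr₂ (α ^ (2 ^ n - 1)))
        (suc.compr₂ (α ^ (2 ^ n - 1))) (α ^ (2 ^ n)) := by
  -- General lemma: for any m, the twisted structure is Hom-prealternative and multiplicative.
  have even_pow : ∀ (m : ℕ) (i : ZMod 2) (x : A), x ∈ h i → (α ^ m) x ∈ h i := by
    intro m
    induction m with
    | zero => intro i x hx; simpa using hx
    | succ m ih =>
      intro i x hx
      rw [pow_succ', Module.End.mul_apply]
      exact hp.1 i _ (ih i x hx)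
  have mpre : ∀ (m : ℕ) (x y : A), (α ^ m) (pre x y) = pre ((α ^ m) x) ((α ^ m) y) := by
    intro m
    induction m with
    | zero => intro x y; simp
    | succ m ih =>
      intro x y
      simp only [pow_succ', Module.End.mul_apply, ih, hmul.1]
  have msuc : ∀ (m : ℕ) (x y : A), (α ^ m) (suc x y) = suc ((α ^ m) x) ((α ^ m) y) := by
    intro m
    induction m with
    | zero => intro x y; simp
    | succ m ih =>
      intro x y
      simp only [pow_succ', Module.End.mul_apply, ih, hmul.2]
  have gen : ∀ m : ℕ,
      IsHomPreAltSuper h (pre.compr₂ (α ^ m)) (suc.compr₂ (α ^ m)) (α ^ (m + 1)) ∧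
      PreMult (pre.compr₂ (α ^ m)) (suc.compr₂ (α ^ m)) (α ^ (m + 1)) := by
    intro m
    have hsucc : ∀ u : A, (α ^ (m + 1)) u = α ((α ^ m) u) := by
      intro u; rw [pow_succ', Module.End.mul_apply]
    constructor
    · refine ⟨even_pow (m + 1), ?_, ?_, ?_⟩
      · intro i j x y hx hy
        simpa using even_pow m (i + j) _ (hp.2.1 i j x y hx hy)
      · intro i j x y hx hy
        simpa using even_pow m (i + j) _ (hp.2.2.1 i j x y hx hy)
      · intro i j k x y z hx hy hz
        have hx' := even_pow m i x hx
        have hy' := even_pow m j y hy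
        have hz' := even_pow m k z hz
        obtain ⟨H1, H2, H3, H4⟩ :=
          hp.2.2.2 i j k ((α ^ m) x) ((α ^ m) y) ((α ^ m) z) hx' hy' hz'
        refine ⟨?_, ?_, ?_, ?_⟩
        · have := congrArg (α ^ m) H1
          simp only [map_add, map_sub, map_smul, map_zero, LinearMap.add_apply, mpre, msuc] at this
          simpa only [LinearMap.compr₂_apply, LinearMap.add_apply, hsucc, map_add, map_sub, map_smul,
            mpre, msuc] using this
        · have := congrArg (α ^ m) H2
          simp only [map_add, map_sub, map_smul, map_zero, LinearMap.add_apply, mpre, msuc] at this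
          simpa only [LinearMap.compr₂_apply, LinearMap.add_apply, hsucc, map_add, map_sub, map_smul,
            mpre, msuc] using this
        · have := congrArg (α ^ m) H3
          simp only [map_add, map_sub, map_smul, map_zero, LinearMap.add_apply, mpre, msuc] at this
          simpa only [LinearMap.compr₂_apply, LinearMap.add_apply, hsucc, map_add, map_sub, map_smul,
            mpre, msuc] using this
        · have := congrArg (α ^ m) H4
          simp only [map_add, map_sub, map_smul, map_zero, LinearMap.add_apply, mpre, msuc] at this
          simpa only [LinearMap.compr₂_apply, LinearMap.add_apply, hsucc, map_add, map_sub, map_smul,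
            mpre, msuc] using this
    · have comp : ∀ (a b : ℕ) (u : A), (α ^ a) ((α ^ b) u) = (α ^ (a + b)) u := by
        intro a b u; rw [← Module.End.mul_apply, ← pow_add]
      have e : m + 1 + m = m + (m + 1) := by omega
      constructor
      · intro x y
        simp only [LinearMap.compr₂_apply, mpre, comp, e]
      · intro x y
        simp only [LinearMap.compr₂_apply, msuc, comp, e]
  intro n
  have hn : 2 ^ n - 1 + 1 = 2 ^ n := Nat.sub_add_cancel (Nat.one_le_two_pow)
  have := gen (2 ^ n - 1)
  rwa [hn] at this
end

section
/- Let (V, L_≺, R_≺, L_≻, R_≻, β) be a bimodule over the Hom-prealternative superalgebra (A, ≺, ≻, α), and let Alt(A) = (A, ∘, α) with x∘y = x≺y+x≻y be the associated Hom-alternative superalgebra. Then (V, L_≻, R_≺, β) is a bimodule over Alt(A). -/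
open LinearMap
open scoped TensorProduct

variable {K : Type*} [Field K]
variable {A B V : Type*} [AddCommGroup A] [Module K A]
  [AddCommGroup B] [Module K B] [AddCommGroup V] [Module K V]

/-- Bimodule over a Hom-prealternative superalgebra:
`Lp x v = x ≺ v`, `Rp x v = v ≺ x`, `Ls x v = x ≻ v`, `Rs x v = v ≻ x`. -/
def IsPreAltBimod (hA : ZMod 2 → Submodule K A) (hV : ZMod 2 → Submodule K V)
    (pre suc : A →ₗ[K] A →ₗ[K] A) (α : A →ₗ[K] A)
    (Lp Rp Ls Rs : A →ₗ[K] V →ₗ[K] V) (β : V →ₗ[K] V) : Prop :=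
  EvenMap hV hV β ∧ EvenBil2 hA hV hV Lp ∧ EvenBil2 hA hV hV Rp ∧
  EvenBil2 hA hV hV Ls ∧ EvenBil2 hA hV hV Rs ∧
  ∀ (i j p : ZMod 2) (x y : A) (v : V), x ∈ hA i → y ∈ hA j → v ∈ hV p →
    (Ls (pre x y + suc x y + sg K i j • (pre y x + suc y x)) (β v)
       = Ls (α x) (Ls y v) + sg K i j • Ls (α y) (Ls x v)) ∧
    (Rs (α y) (Lp x v + Ls x v + sg K i p • (Rp x v + Rs x v))
       = Ls (α x) (Rs y v) - sg K i p • Rs (suc x y) (β v)) ∧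
    (Rp (α y) (Rp x v) + sg K i p • Rp (α y) (Ls x v)
       = Rp (pre x y + suc x y) (β v) + sg K i p • Ls (α x) (Rp y v)) ∧
    (Rp (α y) (Lp x v) + sg K i p • Rp (α y) (Rs x v)
       = Lp (α x) (Rp y v + Rs y v) + sg K i p • Rs (pre x y + suc x y) (β v)) ∧
    (Lp (pre y x) (β v) + sg K i j • Lp (suc x y) (β v)
       = Lp (α y) (Lp x v + Ls x v) + sg K i j • Ls (α x) (Lp y v)) ∧
    (Rp (α x) (Ls y v) + sg K i p • Ls (pre y x + suc y x) (β v)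
       = Ls (α y) (Rp x v) + sg K i p • Ls (α y) (Ls x v)) ∧
    (Rp (α x) (Rs y v) + sg K i j • Rs (α y) (Rp x v + Rs x v)
       = Rs (pre y x) (β v) + sg K i j • Rs (suc x y) (β v)) ∧
    (Lp (suc y x) (β v) + sg K i p • Rs (α x) (Lp y v + Ls y v)
       = Ls (α y) (Lp x v) + sg K i p • Ls (α y) (Rs x v)) ∧
    (Rp (α y) (Rp x v) + sg K i j • Rp (α x) (Rp y v)
       = Rp (pre x y + suc x y + sg K i j • (pre y x + suc y x)) (β v)) ∧
    (Rp (α y) (Lp x v) + sg K j p • Lp (pre x y) (β v)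
       = Lp (α x) (Rp y v + Rs y v + sg K j p • (Lp y v + Ls y v)))

theorem stmt15 (hA : ZMod 2 → Submodule K A) (hV : ZMod 2 → Submodule K V)
    (pre suc : A →ₗ[K] A →ₗ[K] A) (α : A →ₗ[K] A)
    (Lp Rp Ls Rs : A →ₗ[K] V →ₗ[K] V) (β : V →ₗ[K] V)
    (hp : IsHomPreAltSuper hA pre suc α)
    (hbm : IsPreAltBimod hA hV pre suc α Lp Rp Ls Rs β) :
    IsAltBimod hA hV (pre + suc) α Ls Rp β := by
  obtain ⟨hβ, hLp, hRp, hLs, hRs, H⟩ := hbm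
  refine ⟨hβ, hLs, hRp, ?_⟩
  intro i j p x y v hx hy hv
  obtain ⟨h1, h2, h3, h4, h5, h6, h7, h8, h9, h10⟩ := H i j p x y v hx hy hv
  simp only [LinearMap.add_apply, map_add, LinearMap.map_smul,
    LinearMap.smul_apply] at h1 h3 h6 h9 ⊢
  refine ⟨?_, ?_, ?_, ?_⟩
  · linear_combination (norm := module) h3
  · linear_combination (norm := module) -h6
  · linear_combination (norm := module) h1
  · linear_combination (norm := module) -h9
end

section
/- Let (A, ≺, ≻, α) be a Hom-prealternative superalgebra with associated Hom-alternative superalgebra Alt(A) = (A, ∘, α), ∘ = ≺+≻. If (V, L, R, β) is a bimodule over Alt(A), then (V, 0, R, L, 0, β) (i.e., left ≺-action zero, right ≺-action R, left ≻-action L, right ≻-action zero) is a bimodule over the Hom-prealternative superalgebra (A, ≺, ≻, α). -/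
open LinearMap
open scoped TensorProduct

variable {K : Type*} [Field K]
variable {A B V : Type*} [AddCommGroup A] [Module K A]
  [AddCommGroup B] [Module K B] [AddCommGroup V] [Module K V]

theorem stmt17 (hA : ZMod 2 → Submodule K A) (hV : ZMod 2 → Submodule K V)
    (pre suc : A →ₗ[K] A →ₗ[K] A) (α : A →ₗ[K] A)
    (L R : A →ₗ[K] V →ₗ[K] V) (β : V →ₗ[K] V)
    (hp : IsHomPreAltSuper hA pre suc α)
    (hbm : IsAltBimod hA hV (pre + suc) α L R β) :
    IsPreAltBimod hA hV pre suc α 0 R L 0 β := by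
  obtain ⟨hβ, hL, hR, hmain⟩ := hbm
  refine ⟨hβ, ?_, hR, hL, ?_, ?_⟩
  · intro i j x y hx hy
    simp only [LinearMap.zero_apply]; exact (hV (i+j)).zero_mem
  · intro i j x y hx hy
    simp only [LinearMap.zero_apply]; exact (hV (i+j)).zero_mem
  · intro i j p x y v hx hy hv
    obtain ⟨h1, h2, h3, h4⟩ := hmain i j p x y v hx hy hv
    simp only [LinearMap.add_apply, LinearMap.zero_apply, LinearMap.map_zero,
      LinearMap.smul_apply, map_add, map_smul, smul_zero, add_zero, zero_add,
      smul_add] at h1 h2 h3 h4 ⊢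
    refine ⟨?_, ?_, ?_, ?_, ?_, ?_, ?_, ?_, ?_, ?_⟩
    · linear_combination (norm := module) h3
    · module
    · linear_combination (norm := module) h1
    · trivial
    · trivial
    · linear_combination (norm := module) -h2
    · trivial
    · trivial
    · linear_combination (norm := module) -h4
    · trivial
end

section
/- Let (V, L_≺, R_≺, L_≻, R_≻, β) be a bimodule over the multiplicative Hom-prealternative superalgebra (A, ≺, ≻, α), and let Alt(A) = (A, ∘, α), ∘ = ≺+≻. Then (V, L_≻^α, R_≺^α, β), where L_≻^α(x) = L_≻(α²(x)) and R_≺^α(x) = R_≺(α²(x)), is a bimodule over Alt(A). -/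
open LinearMap
open scoped TensorProduct

variable {K : Type*} [Field K]
variable {A B V : Type*} [AddCommGroup A] [Module K A]
  [AddCommGroup B] [Module K B] [AddCommGroup V] [Module K V]

theorem stmt18 (hA : ZMod 2 → Submodule K A) (hV : ZMod 2 → Submodule K V)
    (pre suc : A →ₗ[K] A →ₗ[K] A) (α : A →ₗ[K] A)
    (Lp Rp Ls Rs : A →ₗ[K] V →ₗ[K] V) (β : V →ₗ[K] V)
    (hp : IsHomPreAltSuper hA pre suc α) (hmul : PreMult pre suc α)
    (hbm : IsPreAltBimod hA hV pre suc α Lp Rp Ls Rs β) :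
    IsAltBimod hA hV (pre + suc) α (Ls ∘ₗ (α ∘ₗ α)) (Rp ∘ₗ (α ∘ₗ α)) β := by
  obtain ⟨hα, -, -, -⟩ := hp
  obtain ⟨hm1, hm2⟩ := hmul
  obtain ⟨hβ, hLp, hRp, hLs, hRs, hid⟩ := hbm
  refine ⟨hβ, ?_, ?_, ?_⟩
  · intro i p x v hx hv
    exact hLs i p _ v (hα i _ (hα i x hx)) hv
  · intro i p x v hx hv
    exact hRp i p _ v (hα i _ (hα i x hx)) hv
  · intro i j p x y v hx hy hv
    have hx2 : α (α x) ∈ hA i := hα i _ (hα i x hx)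
    have hy2 : α (α y) ∈ hA j := hα j _ (hα j y hy)
    obtain ⟨e1, e2, e3, e4, e5, e6, e7, e8, e9, e10⟩ :=
      hid i j p (α (α x)) (α (α y)) v hx2 hy2 hv
    refine ⟨?_, ?_, ?_, ?_⟩ <;>
      simp only [LinearMap.comp_apply, LinearMap.add_apply, map_add, map_smul,
        LinearMap.smul_apply, hm1, hm2] at e1 e3 e6 e9 ⊢
    · linear_combination (norm := module) e3
    · linear_combination (norm := module) -e6
    · linear_combination (norm := module) e1
    · linear_combination (norm := module) -e9
end

section
/- Let (A, ≺, ≻, α) be a multiplicative Hom-prealternative superalgebra. Then (A, ∗, α) with x∗y = x≺y + x≻y + (-1)^{|x||y|}(y≺x) + (-1)^{|x||y|}(y≻x) is a multiplicative Hom-Jordan superalgebra. -/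
open LinearMap
open scoped TensorProduct

variable {K : Type*} [Field K]
variable {A B V : Type*} [AddCommGroup A] [Module K A]
  [AddCommGroup B] [Module K B] [AddCommGroup V] [Module K V]

/-- Hom-Jordan superalgebra. -/
def IsHomJordanSuper (h : ZMod 2 → Submodule K A) (μ : A →ₗ[K] A →ₗ[K] A)
    (α : A →ₗ[K] A) : Prop :=
  EvenMap h h α ∧ EvenBil2 h h h μ ∧
  (∀ (i j : ZMod 2) (x y : A), x ∈ h i → y ∈ h j → μ x y = sg K i j • μ y x) ∧
  (∀ (i j k l : ZMod 2) (x y z t : A), x ∈ h i → y ∈ h j → z ∈ h k → t ∈ h l →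
    sg K l (i + k) • asc μ α (μ x y) (α z) (α t)
    + sg K i (j + k) • asc μ α (μ y t) (α z) (α x)
    + sg K j (l + k) • asc μ α (μ t x) (α z) (α y) = 0)

set_option maxHeartbeats 40000000 in
theorem stmt19 (h : ZMod 2 → Submodule K A) (pre suc : A →ₗ[K] A →ₗ[K] A)
    (α : A →ₗ[K] A) (m : A →ₗ[K] A →ₗ[K] A)
    (hp : IsHomPreAltSuper h pre suc α) (hmul : PreMult pre suc α)
    (hm : ∀ (i j : ZMod 2) (x y : A), x ∈ h i → y ∈ h j →
      m x y = pre x y + suc x y + sg K i j • (pre y x + suc y x)) :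
    IsHomJordanSuper h m α ∧
    (∀ (i j : ZMod 2) (x y : A), x ∈ h i → y ∈ h j →
      α (m x y) = m (α x) (α y)) := by
  
  obtain ⟨hα, hpreE, hsucE, hax⟩ := hp
  obtain ⟨hmp, hms⟩ := hmul
  obtain ⟨P, hPapp⟩ : ∃ P' : A →ₗ[K] A →ₗ[K] A,
      (∀ u v : A, P' u v = pre u v + suc u v) := ⟨pre + suc, fun u v => rfl⟩
  have hPE : ∀ (i j : ZMod 2) (u v : A), u ∈ h i → v ∈ h j → P u v ∈ h (i + j) := by
    intro i j u v hu hv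
    rw [hPapp]
    exact Submodule.add_mem _ (hpreE i j u v hu hv) (hsucE i j u v hu hv)
  have hPmul : ∀ u v : A, α (P u v) = P (α u) (α v) := by
    intro u v
    rw [hPapp, hPapp, map_add, hmp, hms]
  have hm' : ∀ (i j : ZMod 2) (u v : A), u ∈ h i → v ∈ h j →
      m u v = P u v + sg K i j • P v u := by
    intro i j u v hu hv
    rw [hm i j u v hu hv, hPapp, hPapp]
  have hmmem : ∀ (i j : ZMod 2) (u v : A), u ∈ h i → v ∈ h j → m u v ∈ h (i + j) := by
    intro i j u v hu hv
    rw [hm' i j u v hu hv]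
    refine Submodule.add_mem _ (hPE i j u v hu hv) (Submodule.smul_mem _ _ ?_)
    have hv' := hPE j i v u hv hu
    rwa [add_comm j i] at hv'
  have s00 : sg K 0 0 = 1 := by norm_num [sg]
  have s01 : sg K 0 1 = 1 := by norm_num [sg]
  have s10 : sg K 1 0 = 1 := by norm_num [sg]
  have s11 : sg K 1 1 = -1 := by norm_num [sg, ZMod.val_one]
  have z00 : (0 : ZMod 2) + 0 = 0 := by decide
  have z01 : (0 : ZMod 2) + 1 = 1 := by decide
  have z10 : (1 : ZMod 2) + 0 = 1 := by decide
  have z11 : (1 : ZMod 2) + 1 = 0 := by decide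
  have hsgsymm : ∀ i j : ZMod 2, sg K i j = sg K j i := by
    intro i j; simp [sg, Nat.mul_comm]
  have hsgpm : ∀ i j : ZMod 2, sg K i j = 1 ∨ sg K i j = -1 := by
    intro i j
    rcases Nat.even_or_odd (i.val * j.val) with he | ho
    · exact Or.inl he.neg_one_pow
    · exact Or.inr ho.neg_one_pow
  have hLA : ∀ (p q r : ZMod 2) (a b c : A), a ∈ h p → b ∈ h q → c ∈ h r →
      P (P a b) (α c) - P (α a) (P b c)
        + sg K p q • (P (P b a) (α c) - P (α b) (P a c)) = 0 := by
    intro p q r a b c ha hb hc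
    have E1 := (hax p q r a b c ha hb hc).1
    have E3 := (hax p q r a b c ha hb hc).2.2.1
    have E3' := (hax q p r b a c hb ha hc).2.2.1
    rw [← hsgsymm p q] at E3'
    rcases hsgpm p q with hs | hs
    · rw [hs] at E1 E3 E3' ⊢
      simp only [hPapp, map_add, LinearMap.add_apply, smul_add, one_smul] at E1 E3 E3' ⊢
      linear_combination (norm := module) E1 + E3 + E3'
    · rw [hs] at E1 E3 E3' ⊢
      simp only [hPapp, map_add, LinearMap.add_apply, smul_add] at E1 E3 E3' ⊢
      linear_combination (norm := module) E1 + E3 - E3'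
  have hcomm : ∀ (i j : ZMod 2) (u v : A), u ∈ h i → v ∈ h j →
      m u v = sg K i j • m v u := by
    intro i j u v hu hv
    rw [hm' i j u v hu hv, hm' j i v u hv hu, ← hsgsymm i j]
    rcases hsgpm i j with hs | hs <;> rw [hs] <;> module
  have hmm : ∀ (i j : ZMod 2) (u v : A), u ∈ h i → v ∈ h j →
      α (m u v) = m (α u) (α v) := by
    intro i j u v hu hv
    rw [hm' i j u v hu hv, hm' i j (α u) (α v) (hα i u hu) (hα j v hv)]
    simp only [map_add, map_smul, hPmul]
  refine ⟨⟨hα, fun i j u v hu hv => hmmem i j u v hu hv, hcomm, ?_⟩, hmm⟩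
  intro i j k l x y z t hx hy hz ht
  have mem01 := hmmem i j x y hx hy
  have e01 := hm' i j x y hx hy
  have e11 := hm' (i + j) k (m x y) (α z) mem01 (hα k z hz)
  have mem11 := hmmem (i + j) k (m x y) (α z) mem01 (hα k z hz)
  have e21 := hm' (i + j + k) l (m (m x y) (α z)) (α (α t)) mem11 (hα l (α t) (hα l t ht))
  have e31 := hm' k l (α z) (α t) (hα k z hz) (hα l t ht)
  have mem31 := hmmem k l (α z) (α t) (hα k z hz) (hα l t ht)
  have e41 := hm' (i + j) (k + l) (α (m x y)) (m (α z) (α t)) (hα (i + j) (m x y) mem01) mem31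
  have mem02 := hmmem j l y t hy ht
  have e02 := hm' j l y t hy ht
  have e12 := hm' (j + l) k (m y t) (α z) mem02 (hα k z hz)
  have mem12 := hmmem (j + l) k (m y t) (α z) mem02 (hα k z hz)
  have e22 := hm' (j + l + k) i (m (m y t) (α z)) (α (α x)) mem12 (hα i (α x) (hα i x hx))
  have e32 := hm' k i (α z) (α x) (hα k z hz) (hα i x hx)
  have mem32 := hmmem k i (α z) (α x) (hα k z hz) (hα i x hx)
  have e42 := hm' (j + l) (k + i) (α (m y t)) (m (α z) (α x)) (hα (j + l) (m y t) mem02) mem32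
  have mem03 := hmmem l i t x ht hx
  have e03 := hm' l i t x ht hx
  have e13 := hm' (l + i) k (m t x) (α z) mem03 (hα k z hz)
  have mem13 := hmmem (l + i) k (m t x) (α z) mem03 (hα k z hz)
  have e23 := hm' (l + i + k) j (m (m t x) (α z)) (α (α y)) mem13 (hα j (α y) (hα j y hy))
  have e33 := hm' k j (α z) (α y) (hα k z hz) (hα j y hy)
  have mem33 := hmmem k j (α z) (α y) (hα k z hz) (hα j y hy)
  have e43 := hm' (l + i) (k + j) (α (m t x)) (m (α z) (α y)) (hα (l + i) (m t x) mem03) mem33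
  simp only [asc]
  rw [e21, e41, e22, e42, e23, e43, e11, e12, e13, e31, e32, e33, e01, e02, e03]
  have H1 := congrArg (⇑(P (α (α z)))) (hLA l i j t x y ht hx hy)
  have H2 := congrArg (⇑(P (α (α y)))) (hLA l i k t x z ht hx hz)
  have H3 := congrArg (⇑(P (α (α z)))) (hLA l j i t y x ht hy hx)
  have H4 := congrArg (⇑(P (α (α x)))) (hLA l j k t y z ht hy hz)
  have H5 := congrArg (⇑(P (α (α z)))) (hLA i j l x y t hx hy ht)
  have H6 := congrArg (⇑(P (α (α t)))) (hLA i j k x y z hx hy hz)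
  have H7 := hLA j k (l + i) (α y) (α z) (P t x) (hα j y hy) (hα k z hz) (hPE l i t x ht hx)
  have H8 := hLA (l + i) k j (P t x) (α z) (α y) (hPE l i t x ht hx) (hα k z hz) (hα j y hy)
  have H9 := hLA i k (l + j) (α x) (α z) (P t y) (hα i x hx) (hα k z hz) (hPE l j t y ht hy)
  have H10 := hLA (l + j) k i (P t y) (α z) (α x) (hPE l j t y ht hy) (hα k z hz) (hα i x hx)
  have H11 := hLA i j (l + k) (α x) (α y) (P t z) (hα i x hx) (hα j y hy) (hPE l k t z ht hz)
  have H12 := hLA j k (i + l) (α y) (α z) (P x t) (hα j y hy) (hα k z hz) (hPE i l x t hx ht)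
  have H13 := hLA (i + l) k j (P x t) (α z) (α y) (hPE i l x t hx ht) (hα k z hz) (hα j y hy)
  have H14 := hLA l k (i + j) (α t) (α z) (P x y) (hα l t ht) (hα k z hz) (hPE i j x y hx hy)
  have H15 := hLA (i + j) k l (P x y) (α z) (α t) (hPE i j x y hx hy) (hα k z hz) (hα l t ht)
  have H16 := hLA l j (i + k) (α t) (α y) (P x z) (hα l t ht) (hα j y hy) (hPE i k x z hx hz)
  have H17 := hLA i k (j + l) (α x) (α z) (P y t) (hα i x hx) (hα k z hz) (hPE j l y t hy ht)
  have H18 := hLA (j + l) k i (P y t) (α z) (α x) (hPE j l y t hy ht) (hα k z hz) (hα i x hx)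
  have H19 := hLA l k (j + i) (α t) (α z) (P y x) (hα l t ht) (hα k z hz) (hPE j i y x hy hx)
  have H20 := hLA (j + i) k l (P y x) (α z) (α t) (hPE j i y x hy hx) (hα k z hz) (hα l t ht)
  have H21 := hLA l i (j + k) (α t) (α x) (P y z) (hα l t ht) (hα i x hx) (hPE j k y z hy hz)
  simp only [map_add, map_sub, map_smul, map_zero, LinearMap.add_apply, LinearMap.sub_apply,
    LinearMap.smul_apply, smul_add, smul_sub, smul_smul, hPmul] at H1 H2 H3 H4 H5 H6 H7 H8 H9 H10 H11 H12 H13 H14 H15 H16 H17 H18 H19 H20 H21 ⊢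
  clear hax hm hm' hmmem hmp hms hpreE hsucE hPE hPmul hPapp hLA hcomm hmm hα
  clear mem01 mem11 mem31 mem02 mem12 mem32 mem03 mem13 mem33
  clear e01 e11 e21 e31 e41 e02 e12 e22 e32 e42 e03 e13 e23 e33 e43
  clear hx hy hz ht hsgsymm hsgpm
  have hc2 : ∀ e : ZMod 2, e = 0 ∨ e = 1 := by decide
  rcases hc2 i with rfl | rfl <;> rcases hc2 j with rfl | rfl <;>
    rcases hc2 k with rfl | rfl <;> rcases hc2 l with rfl | rfl
  · simp only [z00, z01, z10, z11, s00, s01, s10, s11] at H1 H2 H3 H4 H5 H6 H7 H8 H9 H10 H11 H12 H13 H14 H15 H16 H17 H18 H19 H20 H21 ⊢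
    linear_combination (norm := module) H1 + H2 + H3 + H4 + H5 + H6 - H7 + H8 - H9 + H10 - H11 - H12 + H13 - H14 + H15 - H16 - H17 + H18 - H19 + H20 - H21
  · simp only [z00, z01, z10, z11, s00, s01, s10, s11] at H1 H2 H3 H4 H5 H6 H7 H8 H9 H10 H11 H12 H13 H14 H15 H16 H17 H18 H19 H20 H21 ⊢
    linear_combination (norm := module) H1 + H2 + H3 + H4 + H5 + H6 - H7 + H8 - H9 + H10 - H11 - H12 + H13 - H14 + H15 - H16 - H17 + H18 - H19 + H20 - H21
  · simp only [z00, z01, z10, z11, s00, s01, s10, s11] at H1 H2 H3 H4 H5 H6 H7 H8 H9 H10 H11 H12 H13 H14 H15 H16 H17 H18 H19 H20 H21 ⊢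
    linear_combination (norm := module) H1 + H2 + H3 + H4 + H5 + H6 - H7 + H8 - H9 + H10 - H11 - H12 + H13 - H14 + H15 - H16 - H17 + H18 - H19 + H20 - H21
  · simp only [z00, z01, z10, z11, s00, s01, s10, s11] at H1 H2 H3 H4 H5 H6 H7 H8 H9 H10 H11 H12 H13 H14 H15 H16 H17 H18 H19 H20 H21 ⊢
    linear_combination (norm := module) -H1 + H2 - H3 + H4 - H5 + H6 + H7 + H8 + H9 + H10 - H11 + H12 + H13 - H14 - H15 - H16 + H17 + H18 - H19 - H20 - H21
  · simp only [z00, z01, z10, z11, s00, s01, s10, s11] at H1 H2 H3 H4 H5 H6 H7 H8 H9 H10 H11 H12 H13 H14 H15 H16 H17 H18 H19 H20 H21 ⊢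
    linear_combination (norm := module) H1 + H2 + H3 + H4 + H5 + H6 - H7 + H8 - H9 + H10 - H11 - H12 + H13 - H14 + H15 - H16 - H17 + H18 - H19 + H20 - H21
  · simp only [z00, z01, z10, z11, s00, s01, s10, s11] at H1 H2 H3 H4 H5 H6 H7 H8 H9 H10 H11 H12 H13 H14 H15 H16 H17 H18 H19 H20 H21 ⊢
    linear_combination (norm := module) -H1 + H2 - H3 - H4 + H5 - H6 - H7 - H8 + H9 - H10 - H11 - H12 - H13 + H14 + H15 + H16 - H17 + H18 + H19 + H20 + H21
  · simp only [z00, z01, z10, z11, s00, s01, s10, s11] at H1 H2 H3 H4 H5 H6 H7 H8 H9 H10 H11 H12 H13 H14 H15 H16 H17 H18 H19 H20 H21 ⊢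
    linear_combination (norm := module) -H1 + H2 - H3 + H4 - H5 + H6 - H7 - H8 + H9 + H10 - H11 - H12 - H13 + H14 + H15 - H16 + H17 + H18 + H19 + H20 - H21
  · simp only [z00, z01, z10, z11, s00, s01, s10, s11] at H1 H2 H3 H4 H5 H6 H7 H8 H9 H10 H11 H12 H13 H14 H15 H16 H17 H18 H19 H20 H21 ⊢
    linear_combination (norm := module) -H1 + H2 - H3 - H4 + H5 - H6 + H7 + H8 + H9 - H10 - H11 + H12 + H13 - H14 - H15 + H16 - H17 + H18 - H19 - H20 + H21
  · simp only [z00, z01, z10, z11, s00, s01, s10, s11] at H1 H2 H3 H4 H5 H6 H7 H8 H9 H10 H11 H12 H13 H14 H15 H16 H17 H18 H19 H20 H21 ⊢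
    linear_combination (norm := module) H1 + H2 + H3 + H4 + H5 + H6 - H7 + H8 - H9 + H10 - H11 - H12 + H13 - H14 + H15 - H16 - H17 + H18 - H19 + H20 - H21
  · simp only [z00, z01, z10, z11, s00, s01, s10, s11] at H1 H2 H3 H4 H5 H6 H7 H8 H9 H10 H11 H12 H13 H14 H15 H16 H17 H18 H19 H20 H21 ⊢
    linear_combination (norm := module) H1 + H2 + H3 - H4 - H5 + H6 - H7 + H8 + H9 + H10 + H11 + H12 - H13 - H14 - H15 - H16 + H17 + H18 - H19 - H20 - H21
  · simp only [z00, z01, z10, z11, s00, s01, s10, s11] at H1 H2 H3 H4 H5 H6 H7 H8 H9 H10 H11 H12 H13 H14 H15 H16 H17 H18 H19 H20 H21 ⊢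
    linear_combination (norm := module) -H1 + H2 - H3 + H4 - H5 + H6 + H7 + H8 - H9 - H10 - H11 + H12 + H13 + H14 + H15 - H16 - H17 - H18 + H19 + H20 - H21
  · simp only [z00, z01, z10, z11, s00, s01, s10, s11] at H1 H2 H3 H4 H5 H6 H7 H8 H9 H10 H11 H12 H13 H14 H15 H16 H17 H18 H19 H20 H21 ⊢
    linear_combination (norm := module) H1 + H2 + H3 - H4 - H5 + H6 - H7 + H8 - H9 - H10 + H11 + H12 - H13 + H14 + H15 - H16 - H17 - H18 + H19 + H20 - H21
  · simp only [z00, z01, z10, z11, s00, s01, s10, s11] at H1 H2 H3 H4 H5 H6 H7 H8 H9 H10 H11 H12 H13 H14 H15 H16 H17 H18 H19 H20 H21 ⊢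
    linear_combination (norm := module) H1 - H2 - H3 + H4 + H5 + H6 + H7 + H8 - H9 - H10 - H11 + H12 + H13 - H14 + H15 + H16 - H17 - H18 + H19 - H20 - H21
  · simp only [z00, z01, z10, z11, s00, s01, s10, s11] at H1 H2 H3 H4 H5 H6 H7 H8 H9 H10 H11 H12 H13 H14 H15 H16 H17 H18 H19 H20 H21 ⊢
    linear_combination (norm := module) -H1 - H2 + H3 + H4 - H5 - H6 + H7 - H8 - H9 + H10 + H11 - H12 + H13 + H14 - H15 - H16 + H17 - H18 - H19 + H20 + H21
  · simp only [z00, z01, z10, z11, s00, s01, s10, s11] at H1 H2 H3 H4 H5 H6 H7 H8 H9 H10 H11 H12 H13 H14 H15 H16 H17 H18 H19 H20 H21 ⊢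
    linear_combination (norm := module) H1 - H2 - H3 + H4 + H5 + H6 - H7 - H8 + H9 + H10 - H11 - H12 - H13 - H14 + H15 + H16 + H17 + H18 + H19 - H20 - H21
  · simp only [z00, z01, z10, z11, s00, s01, s10, s11] at H1 H2 H3 H4 H5 H6 H7 H8 H9 H10 H11 H12 H13 H14 H15 H16 H17 H18 H19 H20 H21 ⊢
    linear_combination (norm := module) H1 - H2 - H3 + H4 + H5 - H6 + H7 + H8 - H9 - H10 + H11 - H12 - H13 + H14 + H15 - H16 + H17 + H18 - H19 - H20 + H21
end
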